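/- arXiv:1909.13833 — 4 statements merged into one kernel-verified Lean document; each statement's English description precedes it below -/
import Mathlib

section
/- Let P_Z and P_X* be Borel probability measures on ℝ^{d_Z} and ℝ^{d_X} respectively whose supports are not homeomorphic. Then for any sequence of measurable maps f_n : ℝ^{d_Z} → ℝ^{d_X}, if the pushforwards f_n♯P_Z converge weakly to P_X*, then the bi-Lipschitz constants BiLip f_n tend to infinity. -/
/-!
If the bi-Lipschitz constants of `f n` do not tend to infinity, a subsequence is uniformly
`C`-bi-Lipschitz. Weak convergence of the pushforwards keeps a fixed ball of positive
`P_Z`-mass from escaping to infinity, so the subsequence is locally bounded, and Arzelà–Ascoli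
yields a further subsequence converging pointwise to a `C`-bi-Lipschitz map `h`. Dominated
convergence gives `h♯P_Z = P_X*`, and a bi-Lipschitz map is a closed embedding, so it carries
the support of `P_Z` homeomorphically onto that of `P_X*`.
-/

open Set ENNReal Filter MeasureTheory Topology

noncomputable section

/-- The support of a Borel measure: points all of whose open neighbourhoods
have positive measure. -/
def msupp {X : Type*} [TopologicalSpace X] [MeasurableSpace X] (μ : Measure X) : Set X :=
  {z | ∀ N : Set X, IsOpen N → z ∈ N → 0 < μ N}

/-- The bi-Lipschitz constant of `f`: the infimum over `M ∈ [1,∞]` such that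
`M⁻¹ * edist a b ≤ edist (f a) (f b) ≤ M * edist a b` for all `a, b`. -/
noncomputable def eBiLip {α β : Type*} [PseudoEMetricSpace α] [PseudoEMetricSpace β]
    (f : α → β) : ℝ≥0∞ :=
  sInf {M : ℝ≥0∞ | 1 ≤ M ∧ ∀ a b,
    edist a b / M ≤ edist (f a) (f b) ∧ edist (f a) (f b) ≤ M * edist a b}

open Metric NNReal

lemma msupp_eq_support {X : Type*} [TopologicalSpace X] [MeasurableSpace X] (μ : Measure X) :
    msupp μ = μ.support := by
  rw [Measure.support_eq_forall_isOpen]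
  ext z
  exact forall_congr' fun N => ⟨fun h hz hN => h hN hz, fun h hN hz => h hz hN⟩

lemma MeasureTheory.Measure.support_map_of_isClosedMap {X Y : Type*} [TopologicalSpace X]
    [MeasurableSpace X] [OpensMeasurableSpace X] [HereditarilyLindelofSpace X] [TopologicalSpace Y]
    [MeasurableSpace Y] [BorelSpace Y] {h : X → Y} (hc : Continuous h) (hcl : IsClosedMap h)
    (μ : Measure X) : (μ.map h).support = h '' μ.support := by
  have hclosed : IsClosed (h '' μ.support) := hcl _ Measure.isClosed_support
  apply Subset.antisymm
  · apply Measure.support_subset_of_isClosed hclosed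
    rw [mem_ae_iff, Measure.map_apply hc.measurable hclosed.isOpen_compl.measurableSet]
    exact measure_mono_null (fun z hz hzs => hz (mem_image_of_mem h hzs))
      μ.measure_compl_support
  · rintro _ ⟨z, hz, rfl⟩
    rw [Measure.mem_support_iff_forall] at hz ⊢
    exact fun U hU => (hz _ (hc.continuousAt.preimage_mem_nhds hU)).trans_le
      (Measure.le_map_apply hc.aemeasurable U)

lemma Topology.IsClosedEmbedding.nonempty_homeomorph_support_map {X Y : Type*}
    [TopologicalSpace X] [MeasurableSpace X] [OpensMeasurableSpace X]
    [HereditarilyLindelofSpace X] [TopologicalSpace Y] [MeasurableSpace Y] [BorelSpace Y]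
    {h : X → Y} (hh : IsClosedEmbedding h) (μ : Measure X) :
    Nonempty (μ.support ≃ₜ (μ.map h).support) :=
  ⟨(hh.isEmbedding.homeomorphImage _).trans <| .setCongr
    (Measure.support_map_of_isClosedMap hh.continuous hh.isClosedMap μ).symm⟩

lemma lipschitzWith_and_antilipschitzWith_of_eBiLip_lt {α β : Type*} [PseudoEMetricSpace α]
    [PseudoEMetricSpace β] {f : α → β} {C : ℝ≥0} (hf : eBiLip f < C) :
    LipschitzWith C f ∧ AntilipschitzWith C f := by
  obtain ⟨M, ⟨hM1, hM⟩, hMC⟩ := sInf_lt_iff.mp hf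
  refine ⟨fun a b => (hM a b).2.trans (by gcongr), fun a b => ?_⟩
  have hM0 : M ≠ 0 := (zero_lt_one.trans_le hM1).ne'
  calc edist a b ≤ edist (f a) (f b) * M :=
        (ENNReal.div_le_iff_le_mul (.inl hM0) (.inl hMC.ne_top)).mp (hM a b).1
    _ ≤ C * edist (f a) (f b) := by rw [mul_comm]; gcongr

theorem isClosed_setOfPred_antilipschitzWith {α β : Type*} [PseudoEMetricSpace α]
    [PseudoEMetricSpace β] (K : ℝ≥0) : IsClosed {f : α → β | AntilipschitzWith K f} := by
  simp only [AntilipschitzWith, ofPred_forall]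
  refine isClosed_iInter fun x => isClosed_iInter fun y => isClosed_le continuous_const ?_
  exact (ENNReal.continuous_const_mul coe_ne_top).comp
    (.edist (continuous_apply x) (continuous_apply y))

lemma isCompact_setOf_lipschitzWith_mem_closedBall {E F : Type*} [PseudoMetricSpace E]
    [PseudoMetricSpace F] [ProperSpace F] (C : ℝ≥0) (z₀ : E) (y₀ : F) (r : ℝ) :
    IsCompact {u : C(E, F) | LipschitzWith C u ∧ u z₀ ∈ closedBall y₀ r} := by
  set L : Set (E → F) := {u | LipschitzWith C u ∧ u z₀ ∈ closedBall y₀ r}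
  have hL : IsCompact L := by
    refine (isCompact_univ_pi fun z => isCompact_closedBall y₀ (r + C * dist z z₀))
      |>.of_isClosed_subset ((isClosed_setOfPred_lipschitzWith C).inter
        (isClosed_le ((continuous_apply z₀).dist continuous_const) continuous_const)) ?_
    rintro u ⟨hu, hu₀⟩ z -
    calc dist (u z) y₀ ≤ dist (u z) (u z₀) + dist (u z₀) y₀ := dist_triangle _ _ _
      _ ≤ C * dist z z₀ + r := add_le_add (hu.dist_le_mul z z₀) hu₀
      _ = r + C * dist z z₀ := add_comm _ _
  apply ArzelaAscoli.isCompact_of_equicontinuous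
  · convert hL
    ext u
    exact ⟨by rintro ⟨u, hu, rfl⟩; exact hu, fun hu => ⟨⟨u, hu.1.continuous⟩, hu, rfl⟩⟩
  · exact (LipschitzWith.uniformEquicontinuous _ C fun u => u.2.1).equicontinuous

lemma exists_strictMono_tendsto_of_lipschitzWith {E F : Type*} [PseudoMetricSpace E]
    [ProperSpace E] [PseudoMetricSpace F] [ProperSpace F] {C : ℝ≥0} {g : ℕ → E → F}
    (hg : ∀ n, LipschitzWith C (g n)) {z₀ : E} {y₀ : F} {r : ℝ}
    (hr : ∃ᶠ n in atTop, g n z₀ ∈ closedBall y₀ r) :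
    ∃ (h : E → F) (φ : ℕ → ℕ), StrictMono φ ∧
      ∀ z, Tendsto (fun n => g (φ n) z) atTop (𝓝 (h z)) := by
  obtain ⟨u, -, φ, hφ, hu⟩ := (isCompact_setOf_lipschitzWith_mem_closedBall C z₀ y₀ r)
    |>.tendsto_subseq' (x := fun n => ⟨g n, (hg n).continuous⟩)
      (hr.mono fun n hn => ⟨hg n, hn⟩)
  exact ⟨u, φ, hφ, fun z => ((continuous_eval_const z).tendsto u).comp hu⟩

lemma map_eq_of_tendsto_integral_map {E F : Type*} [MeasurableSpace E] [PseudoMetricSpace F]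
    [MeasurableSpace F] [BorelSpace F] {μ : Measure E} [IsFiniteMeasure μ] {ν : Measure F}
    [IsFiniteMeasure ν] {g : ℕ → E → F} {h : E → F} (hg : ∀ n, Measurable (g n))
    (hlim : ∀ z, Tendsto (fun n => g n z) atTop (𝓝 (h z)))
    (hconv : ∀ f : BoundedContinuousFunction F ℝ,
      Tendsto (fun n => ∫ x, f x ∂(μ.map (g n))) atTop (𝓝 (∫ x, f x ∂ν))) :
    μ.map h = ν := by
  have hm : Measurable h := measurable_of_tendsto_metrizable hg (tendsto_pi_nhds.2 hlim)
  refine ext_of_forall_integral_eq_of_IsFiniteMeasure fun f => tendsto_nhds_unique ?_ (hconv f)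
  simp only [integral_map (hg _).aemeasurable f.continuous.aestronglyMeasurable,
    integral_map hm.aemeasurable f.continuous.aestronglyMeasurable]
  exact tendsto_integral_of_dominated_convergence (fun _ => ‖f‖)
    (fun n => (f.continuous.measurable.comp (hg n)).aestronglyMeasurable) (integrable_const _)
    (fun n => .of_forall fun z => f.norm_coe_le_norm _)
    (.of_forall fun z => (f.continuous.tendsto _).comp (hlim z))

lemma exists_eventually_nonempty_inter_preimage_ball {E F : Type*} [MeasurableSpace E]
    [PseudoMetricSpace F] [MeasurableSpace F] [BorelSpace F] {μ : Measure E}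
    [IsProbabilityMeasure μ] {ν : Measure F} [IsProbabilityMeasure ν] {g : ℕ → E → F}
    (hg : ∀ n, Measurable (g n))
    (hconv : ∀ f : BoundedContinuousFunction F ℝ,
      Tendsto (fun n => ∫ x, f x ∂(μ.map (g n))) atTop (𝓝 (∫ x, f x ∂ν)))
    {s : Set E} (hs : μ s ≠ 0) (y₀ : F) :
    ∃ R : ℕ, ∀ᶠ n in atTop, (s ∩ g n ⁻¹' ball y₀ R).Nonempty := by
  let νs : ℕ → ProbabilityMeasure F := fun n =>
    ⟨μ.map (g n), Measure.isProbabilityMeasure_map (hg n).aemeasurable⟩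
  have hνs : Tendsto νs atTop (𝓝 ⟨ν, inferInstance⟩) :=
    ProbabilityMeasure.tendsto_iff_forall_integral_tendsto.mpr hconv
  have hlt : 1 - μ s < ν univ := by
    rw [measure_univ]
    exact ENNReal.sub_lt_self one_ne_top one_ne_zero hs
  have hballs : Tendsto (fun R : ℕ => ν (ball y₀ R)) atTop (𝓝 (ν univ)) := by
    rw [← iUnion_ball_nat y₀]
    exact tendsto_measure_iUnion_atTop fun a b hab => ball_subset_ball (by exact_mod_cast hab)
  obtain ⟨R, hR⟩ := ((tendsto_order.1 hballs).1 _ hlt).exists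
  refine ⟨R, (eventually_lt_of_lt_liminf <| hR.trans_le <|
    ProbabilityMeasure.le_liminf_measure_open_of_tendsto hνs isOpen_ball).mono fun n hn => ?_⟩
  have hpre : MeasurableSet (g n ⁻¹' ball y₀ R) := hg n measurableSet_ball
  refine nonempty_inter_of_measure_lt_add μ hpre (subset_univ _) (subset_univ _) ?_
  rw [measure_univ, ← Measure.map_apply (hg n) measurableSet_ball]
  exact (ENNReal.sub_lt_iff_lt_left (measure_ne_top μ s) prob_le_one).mp hn

theorem nonempty_homeomorph_support_of_tendsto_integral_map {E F : Type*} [MetricSpace E]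
    [ProperSpace E] [MeasurableSpace E] [BorelSpace E] [MetricSpace F] [ProperSpace F]
    [MeasurableSpace F] [BorelSpace F] {μ : Measure E} [IsProbabilityMeasure μ]
    {ν : Measure F} [IsProbabilityMeasure ν] {C : ℝ≥0} {g : ℕ → E → F}
    (hg : ∀ n, Measurable (g n)) (hlip : ∀ n, LipschitzWith C (g n))
    (hanti : ∀ n, AntilipschitzWith C (g n))
    (hconv : ∀ f : BoundedContinuousFunction F ℝ,
      Tendsto (fun n => ∫ x, f x ∂(μ.map (g n))) atTop (𝓝 (∫ x, f x ∂ν))) :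
    Nonempty (μ.support ≃ₜ ν.support) := by
  obtain ⟨z₀, hz₀⟩ := μ.nonempty_support (IsProbabilityMeasure.ne_zero μ)
  have hball : μ (ball z₀ 1) ≠ 0 :=
    (Measure.mem_support_iff_forall z₀ |>.mp hz₀ _ (ball_mem_nhds z₀ one_pos)).ne'
  obtain ⟨R, hR⟩ := exists_eventually_nonempty_inter_preimage_ball hg hconv hball (g 0 z₀)
  have hbdd : ∀ᶠ n in atTop, g n z₀ ∈ closedBall (g 0 z₀) (C + R) := by
    refine hR.mono fun n ⟨w, hw, hwR⟩ => ?_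
    calc dist (g n z₀) (g 0 z₀) ≤ dist (g n z₀) (g n w) + dist (g n w) (g 0 z₀) :=
          dist_triangle _ _ _
      _ ≤ C * 1 + R := by
          gcongr
          · exact (hlip n).dist_le_mul_of_le (mem_ball'.mp hw).le
          · exact (mem_ball.mp hwR).le
      _ = C + R := by rw [mul_one]
  obtain ⟨h, φ, hφ, hlim⟩ := exists_strictMono_tendsto_of_lipschitzWith hlip hbdd.frequently
  have hh_lip : LipschitzWith C h := (isClosed_setOfPred_lipschitzWith C).mem_of_tendsto
    (tendsto_pi_nhds.2 hlim) (.of_forall fun n => hlip _)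
  have hh_anti : AntilipschitzWith C h := (isClosed_setOfPred_antilipschitzWith C).mem_of_tendsto
    (tendsto_pi_nhds.2 hlim) (.of_forall fun n => hanti _)
  have hmap : μ.map h = ν := map_eq_of_tendsto_integral_map (fun n => hg _) hlim
    fun f => (hconv f).comp hφ.tendsto_atTop
  rw [← hmap]
  exact (hh_anti.isClosedEmbedding hh_lip.uniformContinuous).nonempty_homeomorph_support_map μ

/-- If the supports of the prior and the target are not homeomorphic, any sequence of
measurable pushforward maps whose pushforwards converge weakly to the target must have
bi-Lipschitz constants diverging to infinity. -/
theorem stmt7 {dZ dX : ℕ}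
    (PZ : Measure (EuclideanSpace ℝ (Fin dZ)))
    (PXstar : Measure (EuclideanSpace ℝ (Fin dX)))
    [IsProbabilityMeasure PZ] [IsProbabilityMeasure PXstar]
    (hne : ¬ Nonempty (↥(msupp PZ) ≃ₜ ↥(msupp PXstar)))
    (f : ℕ → EuclideanSpace ℝ (Fin dZ) → EuclideanSpace ℝ (Fin dX))
    (hf : ∀ n, Measurable (f n))
    (hconv : ∀ h : BoundedContinuousFunction (EuclideanSpace ℝ (Fin dX)) ℝ,
      Tendsto (fun n => ∫ x, h x ∂(PZ.map (f n))) atTop (nhds (∫ x, h x ∂PXstar))) :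
    Tendsto (fun n => eBiLip (f n)) atTop (nhds ⊤) := by
  by_contra hdiv
  obtain ⟨m, hm⟩ : ∃ m : ℕ, ∃ᶠ n in atTop, eBiLip (f n) ≤ m := by
    simpa [ENNReal.tendsto_nhds_top_iff_nat, frequently_atTop] using hdiv
  obtain ⟨φ, hφ, hφm⟩ := extraction_of_frequently_atTop hm
  have hbi : ∀ k, LipschitzWith (m + 1) (f (φ k)) ∧ AntilipschitzWith (m + 1) (f (φ k)) :=
    fun k => lipschitzWith_and_antilipschitzWith_of_eBiLip_lt <|
      (hφm k).trans_lt (by exact_mod_cast Nat.lt_succ_self m)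
  rw [msupp_eq_support, msupp_eq_support] at hne
  exact hne <| nonempty_homeomorph_support_of_tendsto_integral_map (fun k => hf (φ k))
    (fun k => (hbi k).1) (fun k => (hbi k).2) fun b => (hconv b).comp hφ.tendsto_atTop

end
end

section
/- For |b| > 1, the limit as n → ∞ of (n / bⁿ) · Σ_{j=1}^{n−1} bʲ/j exists and equals 1/(b−1). -/
/-!
Substituting `k = n - j` turns the expression into `∑_{0<k<n} n/(n-k) · b⁻ᵏ`. Each weight
`n/(n-k)` tends to `1` and is bounded by `k + 1`, while `∑ (k+1)|b|⁻ᵏ < ∞`, so by Tannery's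
theorem the sum tends to `∑_{k≥1} b⁻ᵏ = 1/(b-1)`.
-/

open Filter Topology Finset

theorem tendsto_sum_range_of_dominated_convergence {G : Type*} [NormedAddCommGroup G]
    [CompleteSpace G] {f : ℕ → ℕ → G} {g : ℕ → G} {bound : ℕ → ℝ} (h_sum : Summable bound)
    (h_lim : ∀ k, Tendsto (f · k) atTop (𝓝 (g k)))
    (h_bound : ∀ n k, k < n → ‖f n k‖ ≤ bound k) :
    Tendsto (fun n ↦ ∑ k ∈ range n, f n k) atTop (𝓝 (∑' k, g k)) := by
  have h_tsum (n : ℕ) : ∑ k ∈ range n, f n k = ∑' k, if k < n then f n k else 0 := by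
    rw [tsum_eq_sum (s := range n) fun k hk ↦ if_neg (by simpa using hk)]
    exact sum_congr rfl fun k hk ↦ (if_pos (mem_range.mp hk)).symm
  simp only [h_tsum]
  refine tendsto_tsum_of_dominated_convergence h_sum (fun k ↦ ?_) (.of_forall fun n k ↦ ?_)
  · refine (h_lim k).congr' ?_
    filter_upwards [eventually_gt_atTop k] with n hn using (if_pos hn).symm
  · split_ifs with hk
    · exact h_bound n k hk
    · simpa using (norm_nonneg _).trans (h_bound (k + 1) k k.lt_succ_self)

theorem natCast_div_natCast_sub_le {n k : ℕ} (hk : k < n) : (n : ℝ) / (n - k) ≤ k + 1 := by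
  have hpos : (0 : ℝ) < n - k := sub_pos.mpr (by exact_mod_cast hk)
  have hkn : (k : ℝ) + 1 ≤ n := by exact_mod_cast hk
  rw [div_le_iff₀ hpos]
  nlinarith

theorem tendsto_natCast_div_natCast_sub (k : ℕ) :
    Tendsto (fun n : ℕ ↦ (n : ℝ) / (n - k)) atTop (𝓝 1) := by
  simpa [sub_eq_add_neg] using tendsto_natCast_div_add_atTop (-(k : ℝ))

theorem tendsto_sum_range_natCast_div_sub_mul_pow {r : ℝ} (hr : |r| < 1) :
    Tendsto (fun n : ℕ ↦ ∑ k ∈ range n, (n : ℝ) / (n - k) * r ^ k) atTop (𝓝 (1 - r)⁻¹) := by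
  rw [← tsum_geometric_of_abs_lt_one hr]
  have hr' : ‖|r|‖ < 1 := by rwa [Real.norm_eq_abs, abs_abs]
  have h_sum : Summable fun k : ℕ ↦ ((k : ℝ) + 1) * |r| ^ k := by
    simpa [add_mul] using (summable_pow_mul_geometric_of_norm_lt_one 1 hr').add
      (summable_geometric_of_norm_lt_one hr')
  refine tendsto_sum_range_of_dominated_convergence h_sum
    (fun k ↦ by simpa using (tendsto_natCast_div_natCast_sub k).mul_const (r ^ k))
    fun n k hk ↦ ?_
  have hpos : (0 : ℝ) < n - k := sub_pos.mpr (by exact_mod_cast hk)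
  rw [norm_mul, norm_pow, Real.norm_eq_abs, Real.norm_eq_abs,
    abs_of_pos (div_pos (by linarith) hpos)]
  exact mul_le_mul_of_nonneg_right (natCast_div_natCast_sub_le hk) (by positivity)

theorem natCast_div_pow_mul_sum_Ioo_pow_div {b : ℝ} (hb : b ≠ 0) (n : ℕ) :
    (n : ℝ) / b ^ n * ∑ j ∈ Ioo 0 n, b ^ j / j = ∑ k ∈ Ioo 0 n, (n : ℝ) / (n - k) * b⁻¹ ^ k := by
  rw [mul_sum]
  refine sum_nbij' (n - ·) (n - ·) ?_ ?_ ?_ ?_ fun j hj ↦ ?_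
  any_goals (intro i hi; simp only [mem_Ioo] at hi ⊢; omega)
  have hjn : j ≤ n := (mem_Ioo.mp hj).2.le
  rw [Nat.cast_sub hjn, sub_sub_cancel, inv_pow, ← pow_sub_mul_pow b hjn]
  field_simp

/-- For `|b| > 1`, `(n / bⁿ) · Σ_{j=1}^{n−1} bʲ/j → 1/(b−1)` as `n → ∞`. -/
theorem stmt12 (b : ℝ) (hb : 1 < |b|) :
    Tendsto (fun n : ℕ => ((n : ℝ) / b ^ n) * ∑ j ∈ Finset.Ioo 0 n, b ^ j / (j : ℝ))
      atTop (nhds (1 / (b - 1))) := by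
  have hb0 : b ≠ 0 := by rintro rfl; norm_num at hb
  have hb1 : b - 1 ≠ 0 := by rintro h; rw [sub_eq_zero.mp h] at hb; norm_num at hb
  have hr : |b⁻¹| < 1 := by rw [abs_inv]; exact inv_lt_one_of_one_lt₀ hb
  have h_range (n : ℕ) (hn : 0 < n) :
      ∑ k ∈ range n, (n : ℝ) / (n - k) * b⁻¹ ^ k =
        1 + ∑ k ∈ Ioo 0 n, (n : ℝ) / (n - k) * b⁻¹ ^ k := by
    rw [range_eq_Ico, ← Ioo_insert_left hn, sum_insert left_notMem_Ioo]
    simp [(Nat.cast_pos.mpr hn).ne']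
  have h_lim : (1 - b⁻¹)⁻¹ - 1 = 1 / (b - 1) := by field_simp; ring
  rw [← h_lim]
  refine ((tendsto_sum_range_natCast_div_sub_mul_pow hr).sub_const 1).congr' ?_
  filter_upwards [eventually_gt_atTop 0] with n hn
  rw [h_range n hn, natCast_div_pow_mul_sum_Ioo_pow_div hb0, add_sub_cancel_left]
end

section
/- Let g : ℝ → ℝ be differentiable with |g'| bounded by κ < 1, let N be an ℕ-valued random variable with support all of ℕ, and let p_j = P(N ≥ j). Then the Russian roulette estimator S_N(x) = Σ_{j=1}^N [(−1)^{j+1}/j] (g'(x))^j / p_j has finite expectation, equal to Σ_{j=1}^∞ [(−1)^{j+1}/j] (g'(x))^j = log(1 + g'(x)). -/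
/-!
Write the estimator as `∑ j, 1{N > j} • a j / P(N > j)`: its `j`-th term has expectation `a j`
and absolute expectation `|a j|`. The terms `a j` of the series of `log (1 + c)`, `|c| < 1`, are
absolutely summable, so expectation and summation commute (Fubini–Tonelli for series).
-/

open MeasureTheory Finset
open scoped ENNReal

theorem sum_Icc_one_eq_sum_range {M : Type*} [AddCommMonoid M] (f : ℕ → M) (n : ℕ) :
    ∑ j ∈ Icc 1 n, f j = ∑ j ∈ range n, f (j + 1) := by
  rw [← Ico_add_one_right_eq_Icc, sum_Ico_eq_sum_range, Nat.add_sub_cancel]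
  exact sum_congr rfl fun j _ => by rw [add_comm]

theorem sum_range_eq_tsum_indicator {Ω M : Type*} [AddCommMonoid M] [TopologicalSpace M]
    (N : Ω → ℕ) (b : ℕ → M) (ω : Ω) :
    ∑ j ∈ range (N ω), b j = ∑' j, {ω | j < N ω}.indicator (fun _ => b j) ω := by
  have hvanish (j : ℕ) (hj : j ∉ range (N ω)) : {ω | j < N ω}.indicator (fun _ => b j) ω = 0 :=
    Set.indicator_of_notMem (show ω ∉ {ω | j < N ω} from mt mem_range.2 hj) _
  rw [tsum_eq_sum hvanish]
  refine sum_congr rfl fun j hj => ?_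
  exact (Set.indicator_of_mem (show ω ∈ {ω | j < N ω} from mem_range.1 hj) (fun _ => b j)).symm

section TailSum

variable {Ω : Type*} [MeasurableSpace Ω] {μ : Measure Ω} {N : Ω → ℕ}

theorem lintegral_sum_range (hN : Measurable N) (f : ℕ → ℝ≥0∞) :
    ∫⁻ ω, ∑ j ∈ range (N ω), f j ∂μ = ∑' j, f j * μ {ω | j < N ω} := by
  have hs (j : ℕ) : MeasurableSet {ω | j < N ω} := hN measurableSet_Ioi
  simp_rw [sum_range_eq_tsum_indicator N f]
  rw [lintegral_tsum fun j => (measurable_const.indicator (hs j)).aemeasurable]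
  exact tsum_congr fun j => lintegral_indicator_const (hs j) _

variable {E : Type*} [NormedAddCommGroup E]

theorem integrable_sum_range (hN : Measurable N) {b : ℕ → E}
    (hb : ∑' j, ‖b j‖ₑ * μ {ω | j < N ω} ≠ ∞) :
    Integrable (fun ω => ∑ j ∈ range (N ω), b j) μ := by
  refine ⟨?_, ?_⟩
  · exact ((StronglyMeasurable.of_discrete (f := fun n => ∑ j ∈ range n, b j)).comp_measurable
      hN).aestronglyMeasurable
  · calc ∫⁻ ω, ‖∑ j ∈ range (N ω), b j‖ₑ ∂μ
        ≤ ∫⁻ ω, ∑ j ∈ range (N ω), ‖b j‖ₑ ∂μ := lintegral_mono fun ω => enorm_sum_le _ _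
      _ = ∑' j, ‖b j‖ₑ * μ {ω | j < N ω} := lintegral_sum_range hN _
      _ < ∞ := hb.lt_top

theorem integral_sum_range [NormedSpace ℝ E] [CompleteSpace E] (hN : Measurable N) {b : ℕ → E}
    (hb : ∑' j, ‖b j‖ₑ * μ {ω | j < N ω} ≠ ∞) :
    ∫ ω, ∑ j ∈ range (N ω), b j ∂μ = ∑' j, μ.real {ω | j < N ω} • b j := by
  have hs (j : ℕ) : MeasurableSet {ω | j < N ω} := hN measurableSet_Ioi
  simp_rw [sum_range_eq_tsum_indicator N b]
  rw [integral_tsum fun j => (stronglyMeasurable_const.indicator (hs j)).aestronglyMeasurable]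
  · exact tsum_congr fun j => integral_indicator_const _ (hs j)
  · simpa only [enorm_indicator_eq_indicator_enorm, lintegral_indicator_const (hs _)] using hb

end TailSum

section RussianRoulette

variable {Ω : Type*} [MeasurableSpace Ω]

/-- Indices are shifted by one with respect to `S_N`: `a j` is the term of index `j + 1`, whose
weight is `p_{j+1} = P(N > j)`. -/
noncomputable def russianRoulette (μ : Measure Ω) (N : Ω → ℕ) (a : ℕ → ℝ) (ω : Ω) : ℝ :=
  ∑ j ∈ range (N ω), a j / μ.real {ω' | j < N ω'}

variable {μ : Measure Ω} [IsFiniteMeasure μ] {N : Ω → ℕ} {a : ℕ → ℝ}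

theorem enorm_div_measureReal_mul_measure (a : ℝ) {s : Set Ω} (hs : μ s ≠ 0) :
    ‖a / μ.real s‖ₑ * μ s = ‖a‖ₑ := by
  rw [div_eq_mul_inv, enorm_mul, enorm_inv ((measureReal_ne_zero_iff (measure_ne_top μ _)).2 hs),
    Real.enorm_of_nonneg measureReal_nonneg, measureReal_def,
    ENNReal.ofReal_toReal (measure_ne_top μ s), mul_assoc,
    ENNReal.inv_mul_cancel hs (measure_ne_top μ s), mul_one]

theorem integrable_russianRoulette (hN : Measurable N) (ha : Summable fun j => ‖a j‖)
    (hp : ∀ j, μ {ω | j < N ω} ≠ 0) : Integrable (russianRoulette μ N a) μ := by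
  refine integrable_sum_range hN ?_
  simpa only [enorm_div_measureReal_mul_measure _ (hp _)] using
    tsum_enorm_ne_top_iff_summable_norm.2 ha

theorem integral_russianRoulette (hN : Measurable N) (ha : Summable fun j => ‖a j‖)
    (hp : ∀ j, μ {ω | j < N ω} ≠ 0) : ∫ ω, russianRoulette μ N a ω ∂μ = ∑' j, a j := by
  unfold russianRoulette
  rw [integral_sum_range hN]
  · exact tsum_congr fun j =>
      mul_div_cancel₀ _ ((measureReal_ne_zero_iff (measure_ne_top μ _)).2 (hp j))
  · simpa only [enorm_div_measureReal_mul_measure _ (hp _)] using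
      tsum_enorm_ne_top_iff_summable_norm.2 ha

end RussianRoulette

theorem hasSum_log_one_add_of_abs_lt_one {c : ℝ} (hc : |c| < 1) :
    HasSum (fun j : ℕ => (-1) ^ (j + 2) / ((j : ℝ) + 1) * c ^ (j + 1)) (Real.log (1 + c)) := by
  have h := (Real.hasSum_pow_div_log_of_abs_lt_one (x := -c) (by rwa [abs_neg])).neg
  rw [neg_neg, sub_neg_eq_add] at h
  have hterm : (fun j : ℕ => (-1) ^ (j + 2) / ((j : ℝ) + 1) * c ^ (j + 1))
      = fun j : ℕ => -((-c) ^ (j + 1) / ((j : ℝ) + 1)) := by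
    funext j
    rw [neg_pow c]
    ring
  exact hterm ▸ h

theorem summable_norm_log_one_add_of_abs_lt_one {c : ℝ} (hc : |c| < 1) :
    Summable fun j : ℕ => ‖(-1) ^ (j + 2) / ((j : ℝ) + 1) * c ^ (j + 1)‖ := by
  convert (Real.hasSum_pow_div_log_of_abs_lt_one (x := |c|) (by rwa [abs_abs])).summable
    using 2 with j
  have hj : (0 : ℝ) < j + 1 := by positivity
  simp only [norm_mul, norm_div, norm_pow, norm_neg, norm_one, one_pow, Real.norm_eq_abs,
    abs_of_pos hj]
  ring

theorem stmt13_general {Ω : Type*} [MeasurableSpace Ω] (μ : Measure Ω) [IsProbabilityMeasure μ]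
    (N : Ω → ℕ) (hN : Measurable N)
    (hsupp : ∀ n : ℕ, 1 ≤ n → 0 < μ {ω | N ω = n})
    (g : ℝ → ℝ) (κ : ℝ) (hκ : κ < 1)
    (hgκ : ∀ y, |deriv g y| ≤ κ) (x : ℝ) :
    Integrable (fun ω => ∑ j ∈ Finset.Icc 1 (N ω),
        ((-1 : ℝ) ^ (j + 1) / (j : ℝ)) * (deriv g x) ^ j / (μ {ω' | j ≤ N ω'}).toReal) μ ∧
    ∫ ω, (∑ j ∈ Finset.Icc 1 (N ω),
        ((-1 : ℝ) ^ (j + 1) / (j : ℝ)) * (deriv g x) ^ j / (μ {ω' | j ≤ N ω'}).toReal) ∂μ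
      = ∑' j : ℕ, ((-1 : ℝ) ^ (j + 2) / ((j : ℝ) + 1)) * (deriv g x) ^ (j + 1) ∧
    (∑' j : ℕ, ((-1 : ℝ) ^ (j + 2) / ((j : ℝ) + 1)) * (deriv g x) ^ (j + 1))
      = Real.log (1 + deriv g x) := by
  set a : ℕ → ℝ := fun j => (-1) ^ (j + 2) / ((j : ℝ) + 1) * deriv g x ^ (j + 1)
  have hc : |deriv g x| < 1 := (hgκ x).trans_lt hκ
  have hp (j : ℕ) : μ {ω | j < N ω} ≠ 0 :=
    ((hsupp (j + 1) (Nat.le_add_left 1 j)).trans_le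
      (measure_mono fun ω (h : N ω = j + 1) => h.ge)).ne'
  have hestimator : (fun ω => ∑ j ∈ Finset.Icc 1 (N ω),
      ((-1 : ℝ) ^ (j + 1) / (j : ℝ)) * (deriv g x) ^ j / (μ {ω' | j ≤ N ω'}).toReal)
      = russianRoulette μ N a := by
    funext ω
    rw [sum_Icc_one_eq_sum_range]
    push_cast
    rfl
  have ha := summable_norm_log_one_add_of_abs_lt_one hc
  rw [hestimator]
  exact ⟨integrable_russianRoulette hN ha hp, integral_russianRoulette hN ha hp,
    (hasSum_log_one_add_of_abs_lt_one hc).tsum_eq⟩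

/-- The Russian roulette estimator `S_N(x) = Σ_{j=1}^N [(−1)^{j+1}/j] (g'(x))^j / p_j`, where
`p_j = P(N ≥ j) > 0` and `|g'| ≤ κ < 1`, has finite expectation equal to
`Σ_{j=1}^∞ [(−1)^{j+1}/j] (g'(x))^j = log(1 + g'(x))`. -/
theorem stmt13 {Ω : Type*} [MeasurableSpace Ω] (μ : Measure Ω) [IsProbabilityMeasure μ]
    (N : Ω → ℕ) (hN : Measurable N) (hN1 : ∀ ω, 1 ≤ N ω)
    (hsupp : ∀ n : ℕ, 1 ≤ n → 0 < μ {ω | N ω = n})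
    (g : ℝ → ℝ) (hg : Differentiable ℝ g) (κ : ℝ) (hκ : κ < 1)
    (hgκ : ∀ y, |deriv g y| ≤ κ) (x : ℝ) :
    Integrable (fun ω => ∑ j ∈ Finset.Icc 1 (N ω),
        ((-1 : ℝ) ^ (j + 1) / (j : ℝ)) * (deriv g x) ^ j / (μ {ω' | j ≤ N ω'}).toReal) μ ∧
    ∫ ω, (∑ j ∈ Finset.Icc 1 (N ω),
        ((-1 : ℝ) ^ (j + 1) / (j : ℝ)) * (deriv g x) ^ j / (μ {ω' | j ≤ N ω'}).toReal) ∂μ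
      = ∑' j : ℕ, ((-1 : ℝ) ^ (j + 2) / ((j : ℝ) + 1)) * (deriv g x) ^ (j + 1) ∧
    (∑' j : ℕ, ((-1 : ℝ) ^ (j + 2) / ((j : ℝ) + 1)) * (deriv g x) ^ (j + 1))
      = Real.log (1 + deriv g x) :=
  stmt13_general μ N hN hsupp g κ hκ hgκ x
end

section
/- Let N ~ Geometric(p) with p_j = P(N ≥ j) = (1−p)^{j−1}, and let g : ℝ → ℝ be continuously differentiable with Lipschitz constant κ satisfying 1 − p < κ² < 1. Then the set of x ∈ ℝ for which the Russian roulette estimator S_N(x) = Σ_{j=1}^N [(−1)^{j+1}/j](g'(x))^j/p_j has infinite variance has positive Lebesgue measure. -/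
/-! On `{N = n}` the estimator equals the partial sum `T n = rouletteSum p (g' x) n`, so
`E[S_N(x)²] ≥ P(N = n) T n²` with `P(N = n + 1) = p (1 - p)ⁿ`. Consecutive partial sums differ by
a single term, whose weighted square is `p (1 - p) rⁿ⁺² / (n + 2)²` with `r = g'(x)² / (1 - p)`;
when `r > 1` this is unbounded, and since `(T (n + 1) - T n)² ≤ 2 T (n + 1)² + 2 T n²` with
decreasing weights, so are the weighted squares `P(N = n) T n²`. As `κ² > 1 - p`, the set
`{x | g'(x)² > 1 - p}` is nonempty, and it is open because `g'` is continuous. -/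

open MeasureTheory Filter

lemma tendsto_pow_div_sq_atTop {r : ℝ} (hr : 1 < r) :
    Tendsto (fun n : ℕ => r ^ n / (n : ℝ) ^ 2) atTop atTop := by
  have hpos : ∀ᶠ n : ℕ in atTop, (n : ℝ) ^ 2 / r ^ n ∈ Set.Ioi 0 :=
    eventually_atTop.2 ⟨1, fun n hn => by
      have : (0 : ℝ) < n := by exact_mod_cast hn
      simp only [Set.mem_Ioi]; positivity⟩
  exact (tendsto_nhdsWithin_iff.2 ⟨tendsto_pow_const_div_const_pow_of_one_lt 2 hr, hpos⟩)
    |>.inv_tendsto_nhdsGT_zero.congr fun n => inv_div _ _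

lemma not_bddAbove_weighted_sq_of_not_bddAbove_diff {w T : ℕ → ℝ} (hw : Antitone w)
    (hw0 : ∀ n, 0 ≤ w n)
    (h : ¬ BddAbove (Set.range fun n => w (n + 1) * (T (n + 1) - T n) ^ 2)) :
    ¬ BddAbove (Set.range fun n => w n * T n ^ 2) := by
  rintro ⟨C, hC⟩
  refine h ⟨4 * C, ?_⟩
  rintro _ ⟨n, rfl⟩
  have hn : w n * T n ^ 2 ≤ C := hC ⟨n, rfl⟩
  have hn1 : w (n + 1) * T (n + 1) ^ 2 ≤ C := hC ⟨n + 1, rfl⟩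
  have hwn : w (n + 1) * T n ^ 2 ≤ w n * T n ^ 2 :=
    mul_le_mul_of_nonneg_right (hw n.le_succ) (sq_nonneg _)
  have hdiff : (T (n + 1) - T n) ^ 2 ≤ 2 * T (n + 1) ^ 2 + 2 * T n ^ 2 := by
    nlinarith [sq_nonneg (T (n + 1) + T n)]
  calc w (n + 1) * (T (n + 1) - T n) ^ 2
      ≤ w (n + 1) * (2 * T (n + 1) ^ 2 + 2 * T n ^ 2) :=
        mul_le_mul_of_nonneg_left hdiff (hw0 _)
    _ ≤ 4 * C := by linarith

theorem evariance_comp_eq_top_of_not_bddAbove {Ω : Type*} [MeasurableSpace Ω] {μ : Measure Ω}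
    [IsFiniteMeasure μ] {N : Ω → ℕ} (hN : Measurable N) {T : ℕ → ℝ}
    (h : ¬ BddAbove (Set.range fun n => μ.real {ω | N ω = n} * T n ^ 2)) :
    ProbabilityTheory.evariance (fun ω => T (N ω)) μ = ⊤ := by
  have hmeas : Measurable fun ω => T (N ω) := (measurable_from_nat (f := T)).comp hN
  refine ProbabilityTheory.evariance_eq_top hmeas.aestronglyMeasurable fun hmem =>
    h ⟨∫ ω, T (N ω) ^ 2 ∂μ, ?_⟩
  rintro _ ⟨n, rfl⟩
  calc μ.real {ω | N ω = n} * T n ^ 2 = ∫ ω in {ω | N ω = n}, T (N ω) ^ 2 ∂μ := by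
        have hset : MeasurableSet {ω | N ω = n} := hN (measurableSet_singleton n)
        rw [setIntegral_congr_fun hset (fun ω (hω : N ω = n) => by rw [hω]), setIntegral_const,
          smul_eq_mul]
    _ ≤ ∫ ω, T (N ω) ^ 2 ∂μ :=
        setIntegral_le_integral hmem.integrable_sq (Eventually.of_forall fun _ => sq_nonneg _)

theorem measureReal_eq_succ_of_geometric_tail {Ω : Type*} [MeasurableSpace Ω] {μ : Measure Ω}
    [IsFiniteMeasure μ] {p : ℝ} (hp1 : p < 1) {N : Ω → ℕ} (hN : Measurable N)
    (hgeom : ∀ j : ℕ, 1 ≤ j → μ {ω | j ≤ N ω} = ENNReal.ofReal ((1 - p) ^ (j - 1)))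
    (n : ℕ) : μ.real {ω | N ω = n + 1} = p * (1 - p) ^ n := by
  have htail : ∀ j, μ.real {ω | j + 1 ≤ N ω} = (1 - p) ^ j := fun j => by
    rw [measureReal_def, hgeom (j + 1) le_add_self, Nat.add_sub_cancel,
      ENNReal.toReal_ofReal (pow_nonneg (by linarith) _)]
  have hdiff : {ω | N ω = n + 1} = {ω | n + 1 ≤ N ω} \ {ω | n + 2 ≤ N ω} := by
    ext ω; simp only [Set.mem_ofPred_eq, Set.mem_sdiff]; omega
  have hsub : {ω | n + 2 ≤ N ω} ⊆ {ω | n + 1 ≤ N ω} := fun ω (h : n + 2 ≤ N ω) => by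
    simp only [Set.mem_ofPred_eq]; omega
  rw [hdiff, measureReal_sdiff hsub (hN measurableSet_Ici), htail, htail, pow_succ]
  ring

noncomputable def rouletteSum (p a : ℝ) (n : ℕ) : ℝ :=
  ∑ j ∈ Finset.Icc 1 n, ((-1 : ℝ) ^ (j + 1) / (j : ℝ)) * a ^ j / ((1 - p) ^ (j - 1))

lemma rouletteSum_succ_sub_rouletteSum (p a : ℝ) (n : ℕ) :
    rouletteSum p a (n + 1) - rouletteSum p a n =
      (-1) ^ (n + 2) / ((n : ℝ) + 1) * a ^ (n + 1) / (1 - p) ^ n := by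
  rw [rouletteSum, rouletteSum, Finset.sum_Icc_succ_top (by omega), add_sub_cancel_left,
    Nat.add_sub_cancel]
  push_cast
  ring

lemma weight_mul_rouletteSum_sub_sq {p : ℝ} (hp1 : p < 1) (a : ℝ) (n : ℕ) :
    p * (1 - p) ^ (n + 1) * (rouletteSum p a (n + 2) - rouletteSum p a (n + 1)) ^ 2 =
      p * (1 - p) * ((a ^ 2 / (1 - p)) ^ (n + 2) / ((n + 2 : ℕ) : ℝ) ^ 2) := by
  rw [rouletteSum_succ_sub_rouletteSum]
  generalize hq : 1 - p = q
  have hq0 : q ≠ 0 := by linarith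
  have hsign : ((-1 : ℝ) ^ (n + 1 + 2)) ^ 2 = 1 := by
    rw [← pow_mul, pow_mul']; simp
  rw [div_pow, mul_pow, div_pow, hsign, div_pow (a ^ 2)]
  push_cast
  field_simp
  ring

lemma not_bddAbove_weight_mul_rouletteSum_sq {p a : ℝ} (hp0 : 0 < p) (hp1 : p < 1)
    (ha : 1 - p < a ^ 2) :
    ¬ BddAbove (Set.range fun n => p * (1 - p) ^ n * rouletteSum p a (n + 1) ^ 2) := by
  have hq : 0 < 1 - p := by linarith
  have hr : 1 < a ^ 2 / (1 - p) := (one_lt_div hq).2 ha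
  refine not_bddAbove_weighted_sq_of_not_bddAbove_diff (w := fun n => p * (1 - p) ^ n)
    (fun m n hmn => mul_le_mul_of_nonneg_left (pow_le_pow_of_le_one hq.le (by linarith) hmn)
      hp0.le) (fun n => by positivity) ?_
  simp only [weight_mul_rouletteSum_sub_sq hp1]
  exact not_bddAbove_of_tendsto_atTop
    (((tendsto_pow_div_sq_atTop hr).comp (tendsto_add_atTop_nat 2)).const_mul_atTop (by positivity))

theorem evariance_rouletteSum_eq_top {Ω : Type*} [MeasurableSpace Ω] {μ : Measure Ω}
    [IsFiniteMeasure μ] {p : ℝ} (hp0 : 0 < p) (hp1 : p < 1) {N : Ω → ℕ} (hN : Measurable N)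
    (hgeom : ∀ j : ℕ, 1 ≤ j → μ {ω | j ≤ N ω} = ENNReal.ofReal ((1 - p) ^ (j - 1)))
    {a : ℝ} (ha : 1 - p < a ^ 2) :
    ProbabilityTheory.evariance (fun ω => rouletteSum p a (N ω)) μ = ⊤ := by
  refine evariance_comp_eq_top_of_not_bddAbove hN fun hbdd =>
    not_bddAbove_weight_mul_rouletteSum_sq hp0 hp1 ha (hbdd.mono ?_)
  rintro _ ⟨n, rfl⟩
  exact ⟨n + 1, by simp only [measureReal_eq_succ_of_geometric_tail hp1 hN hgeom]⟩

lemma exists_sq_gt_of_isLUB_abs {f : ℝ → ℝ} {κ c : ℝ} (hκ : IsLUB (Set.range fun y => |f y|) κ)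
    (hc : c < κ ^ 2) : ∃ y, c < f y ^ 2 := by
  by_contra! h
  have hub : ∀ y, |f y| ≤ √c := fun y => Real.abs_le_sqrt (h y)
  have hκc : κ ≤ √c := hκ.2 (by rintro _ ⟨y, rfl⟩; exact hub y)
  have hκ0 : 0 ≤ κ := (abs_nonneg _).trans (hκ.1 ⟨0, rfl⟩)
  have := pow_le_pow_left₀ hκ0 hκc 2
  rw [Real.sq_sqrt ((sq_nonneg _).trans (h 0))] at this
  linarith

theorem stmt14_general {Ω : Type*} [MeasurableSpace Ω] (μ : Measure Ω) [IsProbabilityMeasure μ]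
    (p : ℝ) (hp0 : 0 < p) (hp1 : p < 1)
    (N : Ω → ℕ) (hN : Measurable N)
    (hgeom : ∀ j : ℕ, 1 ≤ j → μ {ω | j ≤ N ω} = ENNReal.ofReal ((1 - p) ^ (j - 1)))
    (g : ℝ → ℝ) (hg : ContDiff ℝ 1 g) (κ : ℝ)
    (hκ : IsLUB (Set.range fun y => |deriv g y|) κ)
    (h1 : 1 - p < κ ^ 2) :
    0 < volume {x : ℝ |
      ProbabilityTheory.evariance
        (fun ω => ∑ j ∈ Finset.Icc 1 (N ω),
          ((-1 : ℝ) ^ (j + 1) / (j : ℝ)) * (deriv g x) ^ j / ((1 - p) ^ (j - 1))) μ = ⊤} := by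
  have hopen : IsOpen {x | 1 - p < deriv g x ^ 2} :=
    isOpen_lt continuous_const ((hg.continuous_deriv le_rfl).pow 2)
  obtain ⟨y, hy⟩ := exists_sq_gt_of_isLUB_abs hκ h1
  refine (hopen.measure_pos volume ⟨y, hy⟩).trans_le (measure_mono fun x hx => ?_)
  exact evariance_rouletteSum_eq_top hp0 hp1 hN hgeom hx

/-- For `N ~ Geometric(p)` (so `P(N ≥ j) = (1−p)^{j−1}`) and `g` continuously differentiable
with Lipschitz constant `κ` (i.e. `κ = sup |g'|`) satisfying `1 − p < κ² < 1`, the set of `x`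
where the Russian roulette estimator has infinite variance has positive Lebesgue measure. -/
theorem stmt14 {Ω : Type*} [MeasurableSpace Ω] (μ : Measure Ω) [IsProbabilityMeasure μ]
    (p : ℝ) (hp0 : 0 < p) (hp1 : p < 1)
    (N : Ω → ℕ) (hN : Measurable N) (hN1 : ∀ ω, 1 ≤ N ω)
    (hgeom : ∀ j : ℕ, 1 ≤ j → μ {ω | j ≤ N ω} = ENNReal.ofReal ((1 - p) ^ (j - 1)))
    (g : ℝ → ℝ) (hg : ContDiff ℝ 1 g) (κ : ℝ)
    (hκ : IsLUB (Set.range fun y => |deriv g y|) κ)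
    (h1 : 1 - p < κ ^ 2) (h2 : κ ^ 2 < 1) :
    0 < volume {x : ℝ |
      ProbabilityTheory.evariance
        (fun ω => ∑ j ∈ Finset.Icc 1 (N ω),
          ((-1 : ℝ) ^ (j + 1) / (j : ℝ)) * (deriv g x) ^ j / ((1 - p) ^ (j - 1))) μ = ⊤} :=
  stmt14_general μ p hp0 hp1 N hN hgeom g hg κ hκ h1
end
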